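/- (Infinite diameter, Theorem 2) The distant graph of P(ℤ) has infinite diameter: for every n ∈ ℕ there exist unimodular pairs x, y ∈ ℤ × ℤ such that x and y are joined by a path in the graph G (vertices: unimodular pairs; adjacency: |det| = 1), and the graph distance between x and y in G is at least n. -/

import Mathlib

/-- The determinant of two integer vectors in the plane. -/
def det (x y : ℤ × ℤ) : ℤ := x.1 * y.2 - x.2 * y.1

/-- The distant graph of the projective line over `ℤ`, on the level of unimodular pairs:
vertices are the unimodular pairs, and two of them are adjacent iff the absolute value of
their determinant is `1`. -/
def distGraph : SimpleGraph {x : ℤ × ℤ // Int.gcd x.1 x.2 = 1} where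
  Adj a b := |det a.1 b.1| = 1
  symm := by
    constructor
    intro a b h
    have : det b.1 a.1 = -(det a.1 b.1) := by simp only [det]; ring
    rw [this, abs_neg]
    exact h
  loopless := by
    constructor
    intro a h
    have : det a.1 a.1 = 0 := by simp only [det]; ring
    rw [this] at h
    simp at h

/-!
The consecutive Fibonacci pairs `u i = (F i, F (i + 1))` (`fibPair i`) form a path
`u 0, u 1, u 2, …` in the distant graph. Distant pairs are the edges of the Farey tessellation,
and these never cross: if `|det a b| = 1` and `det a z * det z b > 0`, i.e. `z` lies strictly
inside one of the two arcs of `P(ℝ)` cut out by `a` and `b`, then every neighbour of `z` lies in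
the closed arc (Plücker relation `det a b * det z w = det z b * det a w - det a z * det w b`).
The arcs of the edges `(u (2 * i), u (2 * i + 1))` avoid `u 0`, and the endpoints of each lie
strictly inside the previous one, so a path from `u 0` to `u (2 * n)` enters all `n` of them
one after another.
-/

lemma det_swap (x y : ℤ × ℤ) : det y x = -det x y := by
  simp only [det]; ring

lemma eq_smul_of_det_eq_zero {z w : ℤ × ℤ} (hz : Int.gcd z.1 z.2 = 1) (h : det z w = 0) :
    ∃ k : ℤ, w = k • z := by
  obtain ⟨r, s, hrs⟩ := Int.isCoprime_iff_gcd_eq_one.mpr hz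
  unfold det at h
  refine ⟨r * w.1 + s * w.2, Prod.ext ?_ ?_⟩ <;>
    simp only [Prod.smul_fst, Prod.smul_snd, smul_eq_mul]
  · linear_combination (-w.1) * hrs - s * h
  · linear_combination (-w.2) * hrs + r * h

lemma eq_or_eq_neg_of_det_eq_zero {z w : ℤ × ℤ} (hz : Int.gcd z.1 z.2 = 1)
    (hw : Int.gcd w.1 w.2 = 1) (h : det z w = 0) : w = z ∨ w = -z := by
  obtain ⟨k, rfl⟩ := eq_smul_of_det_eq_zero hz h
  have hk : k.natAbs = 1 := by
    simpa [Prod.smul_fst, Prod.smul_snd, Int.gcd_mul_left, hz] using hw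
  rcases Int.natAbs_eq_iff.mp hk with rfl | rfl <;> simp

def between (a b z : ℤ × ℤ) : ℤ := det a z * det z b

lemma between_neg (a b z : ℤ × ℤ) : between a b (-z) = between a b z := by
  simp only [between, det, Prod.fst_neg, Prod.snd_neg]; ring

lemma between_nonneg_of_adj {a b z w : ℤ × ℤ} (hab : |det a b| = 1) (hzw : |det z w| = 1)
    (hz : 0 < between a b z) : 0 ≤ between a b w := by
  have plucker : det a b * det z w = det z b * det a w - det a z * det w b := by
    simp only [det]; ring
  have hsq : (det z b * det a w - det a z * det w b) ^ 2 = 1 := by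
    rw [← plucker, ← sq_abs, abs_mul, hab, hzw]; norm_num
  -- otherwise `det z b * det a w` and `det a z * det w b` have opposite strict signs,
  -- so their difference cannot be `±1`
  by_contra! hw
  unfold between at hz hw
  nlinarith [sq_nonneg (det z b * det a w + det a z * det w b), mul_pos hz (neg_pos.mpr hw)]

lemma between_pos_or_eq_of_adj {a b z w : ℤ × ℤ} (ha : Int.gcd a.1 a.2 = 1)
    (hb : Int.gcd b.1 b.2 = 1) (hw : Int.gcd w.1 w.2 = 1) (hab : |det a b| = 1)
    (hzw : |det z w| = 1) (hz : 0 < between a b z) :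
    0 < between a b w ∨ w = a ∨ w = -a ∨ w = b ∨ w = -b := by
  rcases (between_nonneg_of_adj hab hzw hz).lt_or_eq with hpos | hzero
  · exact Or.inl hpos
  rcases mul_eq_zero.mp hzero.symm with h | h
  · have := eq_or_eq_neg_of_det_eq_zero ha hw h
    tauto
  · have := eq_or_eq_neg_of_det_eq_zero hb hw (by rw [det_swap, h, neg_zero])
    tauto

def fibPair (i : ℕ) : ℤ × ℤ := (Nat.fib i, Nat.fib (i + 1))

lemma gcd_fibPair (i : ℕ) : Int.gcd (fibPair i).1 (fibPair i).2 = 1 := by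
  simpa [fibPair, Int.gcd_natCast_natCast] using Nat.fib_coprime_fib_succ i

lemma fibPair_add (m j : ℕ) :
    fibPair (m + j + 1) =
      (Nat.fib m : ℤ) • fibPair j + (Nat.fib (m + 1) : ℤ) • fibPair (j + 1) := by
  have h := Nat.fib_add m (j + 1)
  simp only [fibPair, Nat.fib_add m j, Prod.smul_mk, smul_eq_mul, Prod.mk_add_mk,
    show m + j + 1 + 1 = m + (j + 1) + 1 by ring, h]
  push_cast; rfl

lemma abs_det_fibPair_succ (j : ℕ) : |det (fibPair j) (fibPair (j + 1))| = 1 := by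
  induction j with
  | zero => simp [det, fibPair]
  | succ j ih =>
    have h : fibPair (j + 2) = fibPair (j + 1) + fibPair j := by
      simpa [add_comm, add_left_comm] using fibPair_add 1 j
    rw [h, ← ih, ← abs_neg, ← det_swap]
    congr 1
    simp only [det, Prod.fst_add, Prod.snd_add]; ring

lemma between_fibPair_pos {j m : ℕ} (h : j + 2 ≤ m) :
    0 < between (fibPair j) (fibPair (j + 1)) (fibPair m) := by
  obtain ⟨k, rfl⟩ : ∃ k, m = k + 1 + j + 1 := ⟨m - j - 2, by omega⟩
  rw [fibPair_add]
  set d := det (fibPair j) (fibPair (j + 1)) with hd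
  have key : between (fibPair j) (fibPair (j + 1))
      ((Nat.fib (k + 1) : ℤ) • fibPair j + (Nat.fib (k + 2) : ℤ) • fibPair (j + 1)) =
        Nat.fib (k + 2) * Nat.fib (k + 1) * d ^ 2 := by
    simp only [between, hd, det, Prod.fst_add, Prod.snd_add, Prod.smul_fst, Prod.smul_snd,
      smul_eq_mul]
    ring
  rw [key, ← sq_abs, hd, abs_det_fibPair_succ]
  have := Nat.fib_pos.mpr (show 0 < k + 1 by omega)
  have := Nat.fib_pos.mpr (show 0 < k + 2 by omega)
  positivity

lemma between_fibPair_zero_nonpos (j : ℕ) :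
    between (fibPair j) (fibPair (j + 1)) (fibPair 0) ≤ 0 := by
  simp only [between, det, fibPair]
  norm_num

namespace SimpleGraph

variable {V : Type*} {G : SimpleGraph V}

lemma Walk.lt_length_of_mem_layer (S : ℕ → Set V) {x : V} (hx : ∀ i, x ∉ S i)
    (hS : ∀ i z w, z ∈ S (i + 1) → G.Adj z w → w ∈ S (i + 1) ∨ w ∈ S i) :
    ∀ {z : V} (p : G.Walk z x) {i : ℕ}, z ∈ S i → i < p.length
  | _, .nil, i, hz => absurd hz (hx i)
  | _, .cons _ _, 0, _ => by simp
  | _, .cons h p, i + 1, hz => by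
    rw [length_cons]
    rcases hS i _ _ hz h with hw | hw
    · exact (p.lt_length_of_mem_layer S hx hS hw).trans (by omega)
    · exact Nat.succ_lt_succ (p.lt_length_of_mem_layer S hx hS hw)

lemma Reachable.lt_dist_of_mem_layer (S : ℕ → Set V) {x z : V} (hx : ∀ i, x ∉ S i)
    (hS : ∀ i z w, z ∈ S (i + 1) → G.Adj z w → w ∈ S (i + 1) ∨ w ∈ S i)
    (hzx : G.Reachable z x) {i : ℕ} (hz : z ∈ S i) : i < G.dist z x := by
  obtain ⟨p, hp⟩ := hzx.exists_walk_length_eq_dist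
  exact hp ▸ p.lt_length_of_mem_layer S hx hS hz

end SimpleGraph

def fibVertex (i : ℕ) : {x : ℤ × ℤ // Int.gcd x.1 x.2 = 1} := ⟨fibPair i, gcd_fibPair i⟩

lemma reachable_fibVertex (m : ℕ) : distGraph.Reachable (fibVertex 0) (fibVertex m) := by
  induction m with
  | zero => rfl
  | succ m ih => exact ih.trans (SimpleGraph.Adj.reachable (abs_det_fibPair_succ m))

def fibLayer (i : ℕ) : Set {x : ℤ × ℤ // Int.gcd x.1 x.2 = 1} :=
  {z | 0 < between (fibPair (2 * i)) (fibPair (2 * i + 1)) z}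

lemma fibLayer_adj {i : ℕ} {z w : {x : ℤ × ℤ // Int.gcd x.1 x.2 = 1}}
    (hz : z ∈ fibLayer (i + 1)) (hzw : distGraph.Adj z w) :
    w ∈ fibLayer (i + 1) ∨ w ∈ fibLayer i := by
  have beyond (m : ℕ) (hm : 2 * i + 2 ≤ m) (hw : w.1 = fibPair m ∨ w.1 = -fibPair m) :
      w ∈ fibLayer i := by
    change 0 < between _ _ w.1
    rcases hw with hw | hw
    · rw [hw]; exact between_fibPair_pos hm
    · rw [hw, between_neg]; exact between_fibPair_pos hm
  rcases between_pos_or_eq_of_adj (gcd_fibPair _) (gcd_fibPair _) w.2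
    (abs_det_fibPair_succ _) hzw hz with hw | hw | hw | hw | hw
  · exact Or.inl hw
  all_goals right
  · exact beyond _ le_rfl (Or.inl hw)
  · exact beyond _ le_rfl (Or.inr hw)
  · exact beyond _ (by omega) (Or.inl hw)
  · exact beyond _ (by omega) (Or.inr hw)

/-- The distant graph of `P(ℤ)` has infinite diameter: for every `n` there are two
unimodular pairs joined by a path whose graph distance is at least `n`. -/
theorem distGraph_infinite_diameter :
    ∀ n : ℕ, ∃ x y : {x : ℤ × ℤ // Int.gcd x.1 x.2 = 1},
      distGraph.Reachable x y ∧ n ≤ distGraph.dist x y := by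
  intro n
  refine ⟨fibVertex 0, fibVertex (2 * n), reachable_fibVertex _, ?_⟩
  cases n with
  | zero => exact Nat.zero_le _
  | succ n =>
    rw [SimpleGraph.dist_comm]
    exact (reachable_fibVertex _).symm.lt_dist_of_mem_layer fibLayer
      (fun i => (between_fibPair_zero_nonpos (2 * i)).not_gt) (fun i _ _ => fibLayer_adj)
      (between_fibPair_pos (by omega))
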